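/- arXiv:2404.08428 — 10 statements merged into one kernel-verified Lean document; each statement's English description precedes it below -/
import Mathlib

section
/- Let a₁,a₂,a₃,b₁,b₂,b₃ be real numbers and let J be the 3-node ring Jacobian, regarded as a complex matrix. There exists a real ω > 0 such that iω is an eigenvalue of J if and only if both a₁a₂+a₁a₃+a₂a₃ > 0 and (a₁+a₂)(a₁+a₃)(a₂+a₃) = b₁b₂b₃. Moreover, in that case ω = √(a₁a₂+a₁a₃+a₂a₃). -/
open Polynomial

/-- The 3-node ring Jacobian: rows (a₁,b₁,0), (0,a₂,b₂), (b₃,0,a₃). -/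
def ringJacobian3 (a₁ a₂ a₃ b₁ b₂ b₃ : ℝ) : Matrix (Fin 3) (Fin 3) ℝ :=
  !![a₁, b₁, 0; 0, a₂, b₂; b₃, 0, a₃]

lemma ringJacobian3_charpoly_eval (a₁ a₂ a₃ b₁ b₂ b₃ : ℝ) (z : ℂ) :
    ((ringJacobian3 a₁ a₂ a₃ b₁ b₂ b₃).map Complex.ofReal).charpoly.eval z =
    z^3 - ((a₁+a₂+a₃ : ℝ) : ℂ)*z^2 + ((a₁*a₂+a₁*a₃+a₂*a₃ : ℝ) : ℂ)*z
      - ((a₁*a₂*a₃ + b₁*b₂*b₃ : ℝ) : ℂ) := by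
  rw [Matrix.charpoly, Matrix.det_fin_three]
  simp [Matrix.charmatrix_apply, ringJacobian3, Matrix.map_apply, Matrix.one_apply]
  ring

lemma cubic_root_iff (t c d ω : ℝ) :
    ((Complex.I*ω)^3 - (t:ℂ)*(Complex.I*ω)^2 + (c:ℂ)*(Complex.I*ω) - (d:ℂ) = 0) ↔
    (t*ω^2 = d ∧ ω^3 = c*ω) := by
  have I3 : Complex.I^3 = -Complex.I := by
    rw [pow_succ, Complex.I_sq]; ring
  have h : ((Complex.I*ω)^3 - (t:ℂ)*(Complex.I*ω)^2 + (c:ℂ)*(Complex.I*ω) - (d:ℂ))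
      = ((t*ω^2 - d : ℝ) : ℂ) + ((c*ω - ω^3 : ℝ) : ℂ) * Complex.I := by
    rw [mul_pow, mul_pow, I3, Complex.I_sq]
    push_cast
    ring
  rw [h, Complex.ext_iff]
  simp only [Complex.add_re, Complex.add_im, Complex.ofReal_re, Complex.ofReal_im,
    Complex.mul_I_re, Complex.mul_I_im, Complex.zero_re, Complex.zero_im]
  constructor
  · rintro ⟨h1, h2⟩; constructor <;> linarith
  · rintro ⟨h1, h2⟩; constructor <;> linarith

theorem hopf_conditions_ringJacobian3 (a₁ a₂ a₃ b₁ b₂ b₃ : ℝ) :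
    ((∃ ω : ℝ, 0 < ω ∧
        ((ringJacobian3 a₁ a₂ a₃ b₁ b₂ b₃).map Complex.ofReal).charpoly.IsRoot
          (Complex.I * ω)) ↔
      (0 < a₁ * a₂ + a₁ * a₃ + a₂ * a₃ ∧
        (a₁ + a₂) * (a₁ + a₃) * (a₂ + a₃) = b₁ * b₂ * b₃)) ∧
    (∀ ω : ℝ, 0 < ω →
      ((ringJacobian3 a₁ a₂ a₃ b₁ b₂ b₃).map Complex.ofReal).charpoly.IsRoot
          (Complex.I * ω) →
      ω = Real.sqrt (a₁ * a₂ + a₁ * a₃ + a₂ * a₃)) := by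
  have root_iff : ∀ ω : ℝ,
      (((ringJacobian3 a₁ a₂ a₃ b₁ b₂ b₃).map Complex.ofReal).charpoly.IsRoot
        (Complex.I * ω)) ↔
      ((a₁+a₂+a₃)*ω^2 = a₁*a₂*a₃ + b₁*b₂*b₃ ∧
        ω^3 = (a₁*a₂+a₁*a₃+a₂*a₃)*ω) := by
    intro ω
    rw [Polynomial.IsRoot, ringJacobian3_charpoly_eval, cubic_root_iff]
  constructor
  · constructor
    · rintro ⟨ω, hω, hroot⟩
      rw [root_iff] at hroot
      obtain ⟨h1, h2⟩ := hroot
      have hω2 : ω^2 = a₁*a₂+a₁*a₃+a₂*a₃ :=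
        mul_right_cancel₀ (ne_of_gt hω) (by linarith [h2] : ω^2 * ω = (a₁*a₂+a₁*a₃+a₂*a₃) * ω)
      constructor
      · rw [← hω2]; positivity
      · linear_combination h1 - (a₁+a₂+a₃) * hω2
    · rintro ⟨hpos, heq⟩
      refine ⟨Real.sqrt _, Real.sqrt_pos.mpr hpos, ?_⟩
      rw [root_iff]
      have hs : Real.sqrt (a₁*a₂+a₁*a₃+a₂*a₃) ^ 2 = a₁*a₂+a₁*a₃+a₂*a₃ :=
        Real.sq_sqrt hpos.le
      constructor
      · linear_combination (a₁+a₂+a₃) * hs + heq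
      · rw [pow_succ, hs]
  · intro ω hω hroot
    rw [root_iff] at hroot
    have hω2 : ω^2 = a₁*a₂+a₁*a₃+a₂*a₃ :=
      mul_right_cancel₀ (ne_of_gt hω) (by linarith [hroot.2] : ω^2 * ω = (a₁*a₂+a₁*a₃+a₂*a₃) * ω)
    rw [← hω2, Real.sqrt_sq hω.le]
end

section
/- Let a₁,a₂,a₃,b₁,b₂,b₃ be real numbers with a₁a₂+a₁a₃+a₂a₃ > 0 and (a₁+a₂)(a₁+a₃)(a₂+a₃) = b₁b₂b₃, and let J be the 3-node ring Jacobian. Set τ = a₁+a₂+a₃ and ω² = a₁a₂+a₁a₃+a₂a₃. Then the characteristic polynomial of J factors as (X − τ)·(X² + ω²); equivalently, the complex eigenvalues of J are exactly τ, iω and −iω, where ω = √(a₁a₂+a₁a₃+a₂a₃). -/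
open Polynomial

theorem charpoly_factorization_ringJacobian3 (a₁ a₂ a₃ b₁ b₂ b₃ : ℝ)
    (h₁ : 0 < a₁ * a₂ + a₁ * a₃ + a₂ * a₃)
    (h₂ : (a₁ + a₂) * (a₁ + a₃) * (a₂ + a₃) = b₁ * b₂ * b₃) :
    (ringJacobian3 a₁ a₂ a₃ b₁ b₂ b₃).charpoly =
      (X - C (a₁ + a₂ + a₃)) * (X ^ 2 + C (a₁ * a₂ + a₁ * a₃ + a₂ * a₃)) ∧
    (∀ lam : ℂ,
      ((ringJacobian3 a₁ a₂ a₃ b₁ b₂ b₃).map Complex.ofReal).charpoly.IsRoot lam ↔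
        lam = (a₁ + a₂ + a₃ : ℝ) ∨
        lam = Complex.I * (Real.sqrt (a₁ * a₂ + a₁ * a₃ + a₂ * a₃) : ℝ) ∨
        lam = -(Complex.I * (Real.sqrt (a₁ * a₂ + a₁ * a₃ + a₂ * a₃) : ℝ))) := by
  have key : (ringJacobian3 a₁ a₂ a₃ b₁ b₂ b₃).charpoly =
      (X - C (a₁ + a₂ + a₃)) * (X ^ 2 + C (a₁ * a₂ + a₁ * a₃ + a₂ * a₃)) := by
    rw [Matrix.charpoly, Matrix.det_fin_three]
    simp [Matrix.charmatrix_apply, ringJacobian3, Matrix.diagonal]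
    have hb : (C b₁ * C b₂ * C b₃ : ℝ[X])
        = (C a₁ + C a₂) * (C a₁ + C a₃) * (C a₂ + C a₃) := by
      simp only [← C_mul, ← C_add]
      rw [← h₂]
    linear_combination -hb
  refine ⟨key, fun lam => ?_⟩
  have hs : (Real.sqrt (a₁ * a₂ + a₁ * a₃ + a₂ * a₃)) ^ 2
      = a₁ * a₂ + a₁ * a₃ + a₂ * a₃ := Real.sq_sqrt h₁.le
  have hfun : (Complex.ofReal : ℝ → ℂ) = ⇑Complex.ofRealHom := by
    funext r; exact (Complex.ofRealHom_eq_coe r).symm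
  rw [hfun, Matrix.charpoly_map, key]
  have hss : ((Real.sqrt (a₁ * a₂ + a₁ * a₃ + a₂ * a₃) : ℝ) : ℂ) ^ 2
      = ((a₁ * a₂ + a₁ * a₃ + a₂ * a₃ : ℝ) : ℂ) := by
    rw [← Complex.ofReal_pow, hs]
  have hq : lam ^ 2 + ((a₁ * a₂ + a₁ * a₃ + a₂ * a₃ : ℝ) : ℂ)
      = (lam - Complex.I * (Real.sqrt (a₁ * a₂ + a₁ * a₃ + a₂ * a₃) : ℝ)) *
        (lam + Complex.I * (Real.sqrt (a₁ * a₂ + a₁ * a₃ + a₂ * a₃) : ℝ)) := by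
    rw [← hss]
    linear_combination (((Real.sqrt (a₁ * a₂ + a₁ * a₃ + a₂ * a₃) : ℝ) : ℂ) ^ 2) *
      Complex.I_sq
  simp only [IsRoot, Polynomial.eval_map, Polynomial.eval₂_mul, Polynomial.eval₂_sub,
    Polynomial.eval₂_add, Polynomial.eval₂_pow, Polynomial.eval₂_X, Polynomial.eval₂_C,
    Complex.ofRealHom_eq_coe, hq, mul_eq_zero, sub_eq_zero, add_eq_zero_iff_eq_neg, or_assoc]
end

section
/- Let a₁,a₂,a₃,b₁,b₂,b₃ be real numbers with a₁a₂+a₁a₃+a₂a₃ > 0 and (a₁+a₂)(a₁+a₃)(a₂+a₃) = b₁b₂b₃, and let J be the 3-node ring Jacobian. Set τ = a₁+a₂+a₃. Then b₁ ≠ 0 and b₂ ≠ 0, and the vector v = (1, (τ−a₁)/b₁, ((τ−a₁)/b₁)·((τ−a₂)/b₂)) satisfies J·v = τ·v; in particular v is an eigenvector of J for the eigenvalue τ. -/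
theorem eigenvector_real_eigenvalue_ringJacobian3 (a₁ a₂ a₃ b₁ b₂ b₃ : ℝ)
    (h₁ : 0 < a₁ * a₂ + a₁ * a₃ + a₂ * a₃)
    (h₂ : (a₁ + a₂) * (a₁ + a₃) * (a₂ + a₃) = b₁ * b₂ * b₃) :
    b₁ ≠ 0 ∧ b₂ ≠ 0 ∧
    (let τ : ℝ := a₁ + a₂ + a₃
     let v : Fin 3 → ℝ := ![1, (τ - a₁) / b₁, ((τ - a₁) / b₁) * ((τ - a₂) / b₂)]
     (ringJacobian3 a₁ a₂ a₃ b₁ b₂ b₃).mulVec v = τ • v ∧ v ≠ 0) := by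
  have hs12 : a₁ + a₂ ≠ 0 := by
    intro h; have h' : a₂ = -a₁ := by linarith
    rw [h'] at h₁; nlinarith [sq_nonneg a₁]
  have hs13 : a₁ + a₃ ≠ 0 := by
    intro h; have h' : a₃ = -a₁ := by linarith
    rw [h'] at h₁; nlinarith [sq_nonneg a₁]
  have hs23 : a₂ + a₃ ≠ 0 := by
    intro h; have h' : a₃ = -a₂ := by linarith
    rw [h'] at h₁; nlinarith [sq_nonneg a₂]
  have hprod : b₁ * b₂ * b₃ ≠ 0 := by rw [← h₂]; exact mul_ne_zero (mul_ne_zero hs12 hs13) hs23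
  have hb₁ : b₁ ≠ 0 := fun h => hprod (by rw [h]; ring)
  have hb₂ : b₂ ≠ 0 := fun h => hprod (by rw [h]; ring)
  refine ⟨hb₁, hb₂, ?_, ?_⟩
  · funext i
    fin_cases i <;>
      simp [ringJacobian3, Matrix.mulVec, dotProduct, Fin.sum_univ_three] <;>
      field_simp <;> ring_nf <;> nlinarith [h₂]
  · intro h
    have := congrFun h 0
    simp at this
end

section
/- Let a₁,a₂,a₃,b₁,b₂,b₃ be real numbers with a₁a₂+a₁a₃+a₂a₃ > 0 and (a₁+a₂)(a₁+a₃)(a₂+a₃) = b₁b₂b₃, and let J be the 3-node ring Jacobian, regarded as a complex matrix. Set ω = √(a₁a₂+a₁a₃+a₂a₃). Then b₁ ≠ 0 and b₂ ≠ 0, and the complex vector v = (1, (iω−a₁)/b₁, ((iω−a₁)/b₁)·((iω−a₂)/b₂)) satisfies J·v = iω·v; in particular v is an eigenvector of J for the eigenvalue iω, and its complex conjugate is an eigenvector for −iω. -/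
/-!
Put `μ = iω`, so `μ² = -(a₁a₂ + a₁a₃ + a₂a₃)`. Expanding, `(μ - a₁)(μ - a₂)(μ - a₃) - (a₁ + a₂)(a₁ + a₃)(a₂ + a₃)`
equals `(μ - a₁ - a₂ - a₃)(μ² + a₁a₂ + a₁a₃ + a₂a₃) = 0`, so the hypothesis says `(μ - a₁)(μ - a₂)(μ - a₃) = b₁b₂b₃`.
For the ring matrix this is exactly the condition for the vector built by solving the first two rows to satisfy
the third. The eigenvalue `-iω` follows by conjugating, since the matrix is real.
-/

open Matrix

theorem ringJacobian3_map {R : Type*} [Zero R] {f : ℝ → R} (hf : f 0 = 0) (a₁ a₂ a₃ b₁ b₂ b₃ : ℝ) :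
    (ringJacobian3 a₁ a₂ a₃ b₁ b₂ b₃).map f = !![f a₁, f b₁, 0; 0, f a₂, f b₂; f b₃, 0, f a₃] := by
  ext i j
  fin_cases i <;> fin_cases j <;> simp [ringJacobian3, hf]

theorem ringMatrix_mulVec_eq_smul {K : Type*} [Field K] {a₁ a₂ a₃ b₁ b₂ b₃ μ : K}
    (hb₁ : b₁ ≠ 0) (hb₂ : b₂ ≠ 0) (hμ : (μ - a₁) * (μ - a₂) * (μ - a₃) = b₁ * b₂ * b₃) :
    !![a₁, b₁, 0; 0, a₂, b₂; b₃, 0, a₃] *ᵥ ![1, (μ - a₁) / b₁, ((μ - a₁) / b₁) * ((μ - a₂) / b₂)]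
      = μ • ![1, (μ - a₁) / b₁, ((μ - a₁) / b₁) * ((μ - a₂) / b₂)] := by
  ext i
  fin_cases i <;>
    simp only [mulVec, dotProduct, Fin.sum_univ_three, Fin.zero_eta, Fin.mk_one, Fin.reduceFinMk, Fin.isValue,
      of_apply, cons_val', cons_val_fin_one, cons_val_zero, cons_val_one, cons_val, Pi.smul_apply, smul_eq_mul,
      mul_one, zero_mul, add_zero, zero_add] <;>
    field_simp
  · ring
  · ring
  · linear_combination -hμ

theorem sub_mul_sub_mul_sub_eq_of_sq_eq_neg {R : Type*} [CommRing R] {a₁ a₂ a₃ μ : R}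
    (hμ : μ ^ 2 = -(a₁ * a₂ + a₁ * a₃ + a₂ * a₃)) :
    (μ - a₁) * (μ - a₂) * (μ - a₃) = (a₁ + a₂) * (a₁ + a₃) * (a₂ + a₃) := by
  linear_combination (μ - a₁ - a₂ - a₃) * hμ

theorem add_mul_add_mul_add_ne_zero {a₁ a₂ a₃ : ℝ} (h : 0 < a₁ * a₂ + a₁ * a₃ + a₂ * a₃) :
    (a₁ + a₂) * (a₁ + a₃) * (a₂ + a₃) ≠ 0 := by
  -- if `x + y = 0` then `xy + xz + yz = -x² ≤ 0`
  have sum_ne_zero : ∀ x y z : ℝ, 0 < x * y + x * z + y * z → x + y ≠ 0 := by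
    intro x y z hσ hxy
    obtain rfl : y = -x := by linarith
    nlinarith [sq_nonneg x]
  refine mul_ne_zero (mul_ne_zero ?_ ?_) ?_
  · exact sum_ne_zero a₁ a₂ a₃ h
  · exact sum_ne_zero a₁ a₃ a₂ (by linarith)
  · exact sum_ne_zero a₂ a₃ a₁ (by linarith)

theorem map_ofReal_mulVec_conj {n : Type*} [Fintype n] {A : Matrix n n ℝ} {v : n → ℂ} {μ : ℂ}
    (h : A.map Complex.ofReal *ᵥ v = μ • v) :
    A.map Complex.ofReal *ᵥ (fun j => starRingEnd ℂ (v j))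
      = starRingEnd ℂ μ • fun j => starRingEnd ℂ (v j) := by
  ext i
  have hi := congrArg (starRingEnd ℂ) (congrFun h i)
  simpa [mulVec, dotProduct, map_sum] using hi

theorem eigenvector_imaginary_eigenvalue_ringJacobian3 (a₁ a₂ a₃ b₁ b₂ b₃ : ℝ)
    (h₁ : 0 < a₁ * a₂ + a₁ * a₃ + a₂ * a₃)
    (h₂ : (a₁ + a₂) * (a₁ + a₃) * (a₂ + a₃) = b₁ * b₂ * b₃) :
    b₁ ≠ 0 ∧ b₂ ≠ 0 ∧
    (let ω : ℝ := Real.sqrt (a₁ * a₂ + a₁ * a₃ + a₂ * a₃)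
     let v : Fin 3 → ℂ := ![1, (Complex.I * ω - a₁) / b₁,
       ((Complex.I * ω - a₁) / b₁) * ((Complex.I * ω - a₂) / b₂)]
     ((ringJacobian3 a₁ a₂ a₃ b₁ b₂ b₃).map Complex.ofReal).mulVec v
        = (Complex.I * ω) • v ∧
     v ≠ 0 ∧
     ((ringJacobian3 a₁ a₂ a₃ b₁ b₂ b₃).map Complex.ofReal).mulVec
        (fun j => starRingEnd ℂ (v j)) = (-(Complex.I * ω)) • fun j => starRingEnd ℂ (v j)) := by
  have hprod := add_mul_add_mul_add_ne_zero h₁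
  rw [h₂] at hprod
  have hb₁ : b₁ ≠ 0 := left_ne_zero_of_mul (left_ne_zero_of_mul hprod)
  have hb₂ : b₂ ≠ 0 := right_ne_zero_of_mul (left_ne_zero_of_mul hprod)
  refine ⟨hb₁, hb₂, ?_⟩
  intro ω v
  have hω : (Complex.I * ω) ^ 2 = -((a₁ : ℂ) * a₂ + a₁ * a₃ + a₂ * a₃) := by
    rw [mul_pow, Complex.I_sq, ← Complex.ofReal_pow, Real.sq_sqrt h₁.le]
    push_cast
    ring
  have hv : ((ringJacobian3 a₁ a₂ a₃ b₁ b₂ b₃).map Complex.ofReal) *ᵥ v = (Complex.I * ω) • v := by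
    rw [ringJacobian3_map Complex.ofReal_zero]
    refine ringMatrix_mulVec_eq_smul (by exact_mod_cast hb₁) (by exact_mod_cast hb₂) ?_
    rw [sub_mul_sub_mul_sub_eq_of_sq_eq_neg hω]
    exact_mod_cast h₂
  refine ⟨hv, fun h => by simpa [v] using congrFun h 0, ?_⟩
  simpa using map_ofReal_mulVec_conj hv
end

section
/- Let a₁,a₂,a₃,b₁,b₂,b₃ be real numbers satisfying (i−a₁)(i−a₂)(i−a₃) = b₁b₂b₃ (an identity in ℂ, where i is the imaginary unit) and a₁+a₂+a₃ < 0. For j = 1,2,3 set z_j = (i−a_j)/b_j. Then the following are equivalent: (1) the three numbers z₁, z₂, z₃ all lie in a single common open quadrant of ℂ (i.e., all satisfy Re > 0 ∧ Im > 0, or all Re < 0 ∧ Im > 0, or all Re < 0 ∧ Im < 0, or all Re > 0 ∧ Im < 0); (2) a_j < 0 and b_j < 0 for all j = 1,2,3. Moreover, in that case each z_j lies in the open third quadrant (Re z_j < 0 and Im z_j < 0). -/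
lemma rw_aux_neg_of (a b : ℝ) (hb : 0 < b) (hr : 0 < -a / b) : a < 0 := by
  rcases div_pos_iff.mp hr with ⟨h1, _⟩ | ⟨_, h2⟩ <;> linarith

lemma rw_aux_pos_of (a b : ℝ) (hb : 0 < b) (hr : -a / b < 0) : 0 < a := by
  rcases div_neg_iff.mp hr with ⟨_, h2⟩ | ⟨h1, _⟩ <;> linarith

lemma rw_aux_neg_of' (a b : ℝ) (hb : b < 0) (hr : -a / b < 0) : a < 0 := by
  rcases div_neg_iff.mp hr with ⟨h1, _⟩ | ⟨_, h2⟩ <;> linarith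

lemma rw_aux_pos_of' (a b : ℝ) (hb : b < 0) (hr : 0 < -a / b) : 0 < a := by
  rcases div_pos_iff.mp hr with ⟨_, h2⟩ | ⟨h1, _⟩ <;> linarith

theorem rotating_wave_iff_all_negative (a₁ a₂ a₃ b₁ b₂ b₃ : ℝ)
    (h : (Complex.I - a₁) * (Complex.I - a₂) * (Complex.I - a₃)
      = (b₁ : ℂ) * b₂ * b₃)
    (hτ : a₁ + a₂ + a₃ < 0) :
    (let z₁ : ℂ := (Complex.I - a₁) / b₁
     let z₂ : ℂ := (Complex.I - a₂) / b₂
     let z₃ : ℂ := (Complex.I - a₃) / b₃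
     (((0 < z₁.re ∧ 0 < z₁.im) ∧ (0 < z₂.re ∧ 0 < z₂.im) ∧ (0 < z₃.re ∧ 0 < z₃.im)) ∨
      ((z₁.re < 0 ∧ 0 < z₁.im) ∧ (z₂.re < 0 ∧ 0 < z₂.im) ∧ (z₃.re < 0 ∧ 0 < z₃.im)) ∨
      ((z₁.re < 0 ∧ z₁.im < 0) ∧ (z₂.re < 0 ∧ z₂.im < 0) ∧ (z₃.re < 0 ∧ z₃.im < 0)) ∨
      ((0 < z₁.re ∧ z₁.im < 0) ∧ (0 < z₂.re ∧ z₂.im < 0) ∧ (0 < z₃.re ∧ z₃.im < 0)) ↔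
        (a₁ < 0 ∧ a₂ < 0 ∧ a₃ < 0 ∧ b₁ < 0 ∧ b₂ < 0 ∧ b₃ < 0)) ∧
     ((a₁ < 0 ∧ a₂ < 0 ∧ a₃ < 0 ∧ b₁ < 0 ∧ b₂ < 0 ∧ b₃ < 0) →
       (z₁.re < 0 ∧ z₁.im < 0) ∧ (z₂.re < 0 ∧ z₂.im < 0) ∧ (z₃.re < 0 ∧ z₃.im < 0))) := by
  have hre : ∀ a b : ℝ, ((Complex.I - a) / b : ℂ).re = -a / b := by
    intro a b; simp [Complex.div_ofReal_re]
  have him : ∀ a b : ℝ, ((Complex.I - a) / b : ℂ).im = 1 / b := by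
    intro a b; simp [Complex.div_ofReal_im]
  have hc := h
  rw [Complex.ext_iff] at hc
  simp [Complex.mul_re, Complex.mul_im] at hc
  have e1 : a₁ + a₂ + a₃ - a₁ * a₂ * a₃ = b₁ * b₂ * b₃ := by nlinarith [hc.1, hc.2]
  have e2 : a₁ * a₂ + a₁ * a₃ + a₂ * a₃ = 1 := by nlinarith [hc.1, hc.2]
  -- the "moreover" part
  have third : (a₁ < 0 ∧ a₂ < 0 ∧ a₃ < 0 ∧ b₁ < 0 ∧ b₂ < 0 ∧ b₃ < 0) →
      ((-a₁ / b₁ < 0 ∧ 1 / b₁ < 0) ∧ (-a₂ / b₂ < 0 ∧ 1 / b₂ < 0) ∧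
       (-a₃ / b₃ < 0 ∧ 1 / b₃ < 0)) := by
    rintro ⟨ha1, ha2, ha3, hb1, hb2, hb3⟩
    refine ⟨⟨?_, ?_⟩, ⟨?_, ?_⟩, ⟨?_, ?_⟩⟩
    · exact div_neg_of_pos_of_neg (by linarith) hb1
    · exact one_div_neg.mpr hb1
    · exact div_neg_of_pos_of_neg (by linarith) hb2
    · exact one_div_neg.mpr hb2
    · exact div_neg_of_pos_of_neg (by linarith) hb3
    · exact one_div_neg.mpr hb3
  simp only [hre, him]
  constructor
  · constructor
    · rintro (⟨⟨r1, m1⟩, ⟨r2, m2⟩, ⟨r3, m3⟩⟩ | ⟨⟨r1, m1⟩, ⟨r2, m2⟩, ⟨r3, m3⟩⟩ |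
        ⟨⟨r1, m1⟩, ⟨r2, m2⟩, ⟨r3, m3⟩⟩ | ⟨⟨r1, m1⟩, ⟨r2, m2⟩, ⟨r3, m3⟩⟩)
      · -- first quadrant: contradiction
        have hb1 : 0 < b₁ := one_div_pos.mp m1
        have hb2 : 0 < b₂ := one_div_pos.mp m2
        have hb3 : 0 < b₃ := one_div_pos.mp m3
        have ha1 : a₁ < 0 := rw_aux_neg_of _ _ hb1 r1
        have ha2 : a₂ < 0 := rw_aux_neg_of _ _ hb2 r2
        have ha3 : a₃ < 0 := rw_aux_neg_of _ _ hb3 r3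
        exfalso
        nlinarith [mul_pos (mul_pos hb1 hb2) hb3,
          mul_pos (mul_pos (neg_pos.mpr ha1) (neg_pos.mpr ha2)) (neg_pos.mpr ha3),
          mul_nonneg (neg_pos.mpr ha1).le (sq_nonneg (a₂ - a₃)),
          mul_nonneg (neg_pos.mpr ha2).le (sq_nonneg (a₁ - a₃)),
          mul_nonneg (neg_pos.mpr ha3).le (sq_nonneg (a₁ - a₂))]
      · -- second quadrant: contradicts hτ
        have hb1 : 0 < b₁ := one_div_pos.mp m1
        have hb2 : 0 < b₂ := one_div_pos.mp m2
        have hb3 : 0 < b₃ := one_div_pos.mp m3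
        have ha1 := rw_aux_pos_of _ _ hb1 r1
        have ha2 := rw_aux_pos_of _ _ hb2 r2
        have ha3 := rw_aux_pos_of _ _ hb3 r3
        exact absurd hτ (by linarith)
      · -- third quadrant: the real case
        have hb1 : b₁ < 0 := one_div_neg.mp m1
        have hb2 : b₂ < 0 := one_div_neg.mp m2
        have hb3 : b₃ < 0 := one_div_neg.mp m3
        exact ⟨rw_aux_neg_of' _ _ hb1 r1, rw_aux_neg_of' _ _ hb2 r2,
          rw_aux_neg_of' _ _ hb3 r3, hb1, hb2, hb3⟩
      · -- fourth quadrant: contradicts hτ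
        have hb1 : b₁ < 0 := one_div_neg.mp m1
        have hb2 : b₂ < 0 := one_div_neg.mp m2
        have hb3 : b₃ < 0 := one_div_neg.mp m3
        have ha1 := rw_aux_pos_of' _ _ hb1 r1
        have ha2 := rw_aux_pos_of' _ _ hb2 r2
        have ha3 := rw_aux_pos_of' _ _ hb3 r3
        exact absurd hτ (by linarith)
    · intro hneg
      exact Or.inr (Or.inr (Or.inl (third hneg)))
  · exact third
end

section
/- Let n ≥ 2, let a, b : Fin n → ℝ, and let J(a,b) be the n-node ring Jacobian, regarded as a complex matrix. A complex number λ is an eigenvalue of J(a,b) (i.e., a root of its characteristic polynomial) if and only if ∏_{i} (λ − a_i) = ∏_{i} b_i. -/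
open Polynomial

/-- The n-node ring Jacobian: diagonal entries `a i`, entries `b i` in position
`(i, i+1 mod n)`, all other entries zero. -/
def ringJacobianN (n : ℕ) (a b : Fin n → ℝ) : Matrix (Fin n) (Fin n) ℝ :=
  Matrix.of fun i j =>
    if (j : ℕ) = (i : ℕ) then a i
    else if (j : ℕ) = ((i : ℕ) + 1) % n then b i else 0

/-!
`λ • 1 - J(a, b)` is again cyclic bidiagonal: `λ - aᵢ` on the diagonal and `-bᵢ` at `(i, i + 1)`.
In the Leibniz expansion of its determinant, a permutation contributes only if it sends every
column `i` to row `i` or `i - 1`, and the only such permutations are the identity and the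
backward rotation, an `n`-cycle. Hence `det (λ • 1 - J) = ∏ (λ - aᵢ) - ∏ bᵢ`.
-/

open scoped Fin.CommRing

namespace Fin

variable {n : ℕ} [NeZero n]

lemma perm_eq_one_or_eq_finRotate_symm {σ : Equiv.Perm (Fin n)}
    (h : ∀ i, σ i = i ∨ σ i = i - 1) : σ = 1 ∨ σ = (finRotate n).symm := by
  by_cases hid : σ = 1
  · exact .inl hid
  right
  obtain ⟨i, hi⟩ : ∃ i, σ i ≠ i := by simpa [Equiv.ext_iff] using hid
  have hone : (1 : Fin n) ≠ 0 := fun h10 => hi (by simpa [h10] using (h i).resolve_left hi)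
  -- once one point moves down, injectivity forces its predecessor to move down as well
  have hdown : ∀ k : ℕ, σ (i - k) = i - k - 1 := by
    intro k
    induction k with
    | zero => simpa using (h i).resolve_left hi
    | succ k ih =>
      have hmove : σ (i - k - 1) ≠ i - k - 1 := fun hfix =>
        hone (sub_eq_self.mp (σ.injective (hfix.trans ih.symm)))
      simpa [sub_sub] using (h _).resolve_left hmove
  refine Equiv.ext fun j => ?_
  simpa using hdown (i - j).val

end Fin

namespace Matrix

variable {R S : Type*} [CommRing R] [CommRing S] {n : ℕ} [NeZero n]

def cyclicBidiagonal (d e : Fin n → R) : Matrix (Fin n) (Fin n) R :=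
  of fun i j => if j = i then d i else if j = i + 1 then e i else 0

lemma cyclicBidiagonal_map (f : R →+* S) (d e : Fin n → R) :
    (cyclicBidiagonal d e).map f = cyclicBidiagonal (f ∘ d) (f ∘ e) := by
  ext i j
  simp only [cyclicBidiagonal, map_apply, of_apply, Function.comp_apply]
  split_ifs <;> simp

lemma scalar_sub_cyclicBidiagonal (t : R) (d e : Fin n → R) :
    scalar (Fin n) t - cyclicBidiagonal d e = cyclicBidiagonal (fun i => t - d i) (-e) := by
  ext i j
  obtain rfl | hij := eq_or_ne j i
  · simp [cyclicBidiagonal]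
  · simp [cyclicBidiagonal, hij, Ne.symm hij]
    split_ifs <;> simp

lemma cyclicBidiagonal_apply_eq_zero {d e : Fin n → R} {i j : Fin n} (h₀ : i ≠ j)
    (h₁ : i ≠ j - 1) : cyclicBidiagonal d e i j = 0 := by
  rw [ne_eq, eq_sub_iff_add_eq] at h₁
  simp [cyclicBidiagonal, Ne.symm h₀, Ne.symm h₁]

lemma det_cyclicBidiagonal {n : ℕ} (d e : Fin (n + 2) → R) :
    (cyclicBidiagonal d e).det = ∏ i, d i - ∏ i, -e i := by
  set c : Equiv.Perm (Fin (n + 2)) := (finRotate (n + 2)).symm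
  have hc : (1 : Equiv.Perm (Fin (n + 2))) ≠ c := by
    simpa [Equiv.ext_iff, c] using ⟨0, by simp⟩
  -- only the identity and the backward rotation pick nonzero entries in every column
  have hvanish : ∀ σ : Equiv.Perm (Fin (n + 2)), σ ≠ 1 ∧ σ ≠ c →
      Equiv.Perm.sign σ • ∏ i, cyclicBidiagonal d e (σ i) i = 0 := by
    rintro σ ⟨hσ₁, hσc⟩
    obtain ⟨i, hfix, hdown⟩ : ∃ i, σ i ≠ i ∧ σ i ≠ i - 1 := by
      by_contra! hall
      exact (Fin.perm_eq_one_or_eq_finRotate_symm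
        fun i => or_iff_not_imp_left.mpr (hall i)).elim hσ₁ hσc
    rw [Finset.prod_eq_zero (Finset.mem_univ i) (cyclicBidiagonal_apply_eq_zero hfix hdown),
      smul_zero]
  have hrot : ∏ i, cyclicBidiagonal d e (c i) i = ∏ i, e i := by
    calc ∏ i, cyclicBidiagonal d e (c i) i = ∏ i, e (i - 1) := by
          refine Finset.prod_congr rfl fun i _ => ?_
          simp [c, cyclicBidiagonal, eq_sub_iff_add_eq]
      _ = ∏ i, e i := (Equiv.subRight 1).prod_comp e
  rw [det_apply, Fintype.sum_eq_add 1 c hc hvanish, hrot]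
  simp [c, sign_finRotate, Finset.prod_neg, cyclicBidiagonal, pow_succ, Units.smul_def,
    sub_eq_add_neg]

end Matrix

lemma ringJacobianN_eq_cyclicBidiagonal {n : ℕ} [NeZero n] (a b : Fin n → ℝ) :
    ringJacobianN n a b = Matrix.cyclicBidiagonal a b := by
  ext i j
  simp [ringJacobianN, Matrix.cyclicBidiagonal, Fin.ext_iff, Fin.val_add]

theorem eigenvalue_ringJacobianN_iff (n : ℕ) (hn : 2 ≤ n) (a b : Fin n → ℝ)
    (lam : ℂ) :
    ((ringJacobianN n a b).map Complex.ofReal).charpoly.IsRoot lam ↔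
      (∏ i, (lam - a i)) = ∏ i, (b i : ℂ) := by
  obtain ⟨m, rfl⟩ := Nat.exists_eq_add_of_le' hn
  rw [IsRoot, Matrix.eval_charpoly, ringJacobianN_eq_cyclicBidiagonal,
    show Complex.ofReal = ⇑Complex.ofRealHom from rfl, Matrix.cyclicBidiagonal_map,
    Matrix.scalar_sub_cyclicBidiagonal, Matrix.det_cyclicBidiagonal, sub_eq_zero]
  simp
end

section
/- Let n ≥ 2, let a, b : Fin n → ℝ with b_i ≠ 0 for all i, let μ ∈ ℂ satisfy ∏_{i} (μ − a_i) = ∏_{i} b_i, and let J(a,b) be the n-node ring Jacobian, regarded as a complex matrix. Define u : Fin n → ℂ by u_j = ∏_{k < j} (μ − a_k)/b_k (so u_0 = 1, the empty product). Then J(a,b)·u = μ·u; in particular u is a nonzero eigenvector of J(a,b) for the eigenvalue μ. -/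
open Polynomial

theorem eigenvector_ringJacobianN (n : ℕ) (hn : 2 ≤ n) (a b : Fin n → ℝ)
    (hb : ∀ i, b i ≠ 0) (μ : ℂ)
    (hμ : (∏ i, (μ - a i)) = ∏ i, (b i : ℂ)) :
    (let u : Fin n → ℂ := fun j => ∏ k ∈ Finset.Iio j, (μ - a k) / b k
     ((ringJacobianN n a b).map Complex.ofReal).mulVec u = μ • u ∧ u ≠ 0) := by
  haveI : NeZero n := ⟨by omega⟩
  intro u
  have hbC : ∀ k : Fin n, (b k : ℂ) ≠ 0 := fun k => by
    exact_mod_cast Complex.ofReal_ne_zero.mpr (hb k)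
  have hval1 : ((1 : Fin n) : ℕ) = 1 := by
    rw [Fin.val_one']; exact Nat.mod_eq_of_lt (by omega)
  have hvaladd : ∀ i : Fin n, ((i + 1 : Fin n) : ℕ) = ((i : ℕ) + 1) % n := by
    intro i; rw [Fin.val_add, hval1]
  have hu0 : u 0 = 1 := by
    show (∏ k ∈ Finset.Iio (0 : Fin n), (μ - a k) / b k) = 1
    have : Finset.Iio (0 : Fin n) = ∅ := by
      ext k; simp [Fin.lt_def]
    rw [this, Finset.prod_empty]
  -- the key recurrence
  have key : ∀ i : Fin n, (b i : ℂ) * u (i + 1) = (μ - a i) * u i := by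
    intro i
    by_cases hi : (i : ℕ) + 1 < n
    · have hvi : ((i + 1 : Fin n) : ℕ) = (i : ℕ) + 1 := by
        rw [hvaladd, Nat.mod_eq_of_lt hi]
      have hIio : Finset.Iio (i + 1) = insert i (Finset.Iio i) := by
        ext k
        simp only [Finset.mem_Iio, Finset.mem_insert, Fin.lt_def, hvi, Fin.ext_iff]
        omega
      have hnotmem : i ∉ Finset.Iio i := by simp
      show (b i : ℂ) * ∏ k ∈ Finset.Iio (i + 1), (μ - a k) / b k
          = (μ - a i) * ∏ k ∈ Finset.Iio i, (μ - a k) / b k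
      rw [hIio, Finset.prod_insert hnotmem,
        show (b i : ℂ) * ((μ - a i) / b i * ∏ k ∈ Finset.Iio i, (μ - a k) / b k)
          = (μ - a i) / b i * b i * ∏ k ∈ Finset.Iio i, (μ - a k) / b k by ring,
        div_mul_cancel₀ _ (hbC i)]
    · have hlast : (i : ℕ) + 1 = n := by have := i.isLt; omega
      have hi0 : i + 1 = 0 := by
        apply Fin.ext; rw [hvaladd, hlast, Nat.mod_self, Fin.val_zero]
      rw [hi0, hu0, mul_one]
      show (b i : ℂ) = (μ - a i) * ∏ k ∈ Finset.Iio i, (μ - a k) / b k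
      have hIio : Finset.Iio i = Finset.univ.erase i := by
        ext k
        simp only [Finset.mem_Iio, Finset.mem_erase, Finset.mem_univ, and_true,
          Fin.lt_def, ne_eq, Fin.ext_iff]
        have := k.isLt
        omega
      rw [hIio, Finset.prod_div_distrib]
      have ha' : (μ - a i) * ∏ k ∈ Finset.univ.erase i, (μ - (a k : ℂ))
          = ∏ k, (μ - (a k : ℂ)) :=
        Finset.mul_prod_erase Finset.univ (fun k => μ - (a k : ℂ)) (Finset.mem_univ i)
      have hb' : (b i : ℂ) * ∏ k ∈ Finset.univ.erase i, (b k : ℂ)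
          = ∏ k, (b k : ℂ) :=
        Finset.mul_prod_erase Finset.univ (fun k => (b k : ℂ)) (Finset.mem_univ i)
      have hprodne : (∏ k ∈ Finset.univ.erase i, (b k : ℂ)) ≠ 0 :=
        Finset.prod_ne_zero_iff.mpr fun k _ => hbC k
      rw [mul_div_assoc', ha', hμ, ← hb', mul_div_assoc, div_self hprodne, mul_one]
  constructor
  · funext i
    have hne : i ≠ i + 1 := by
      intro h
      have h2 : ((i : ℕ) + 1) % n = (i : ℕ) := by rw [← hvaladd, ← h]
      by_cases hc : (i : ℕ) + 1 < n
      · rw [Nat.mod_eq_of_lt hc] at h2; omega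
      · have h3 : (i : ℕ) + 1 = n := by have := i.isLt; omega
        rw [h3, Nat.mod_self] at h2
        omega
    have entry : ∀ j, ((ringJacobianN n a b).map Complex.ofReal) i j * u j
        = (if j = i then (a i : ℂ) * u i else 0)
          + (if j = i + 1 then (b i : ℂ) * u j else 0) := by
      intro j
      simp only [ringJacobianN, Matrix.map_apply, Matrix.of_apply,
        ← hvaladd i, Fin.val_eq_val]
      by_cases h1 : j = i
      · subst h1
        rw [if_pos rfl, if_pos rfl, if_neg (fun h => hne h)]
        push_cast
        ring
      · rw [if_neg h1, if_neg h1]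
        by_cases h2 : j = i + 1
        · rw [if_pos h2, if_pos h2]
          push_cast
          ring
        · rw [if_neg h2, if_neg h2]
          push_cast
          ring
    show ∑ j, ((ringJacobianN n a b).map Complex.ofReal) i j * u j = μ * u i
    calc ∑ j, ((ringJacobianN n a b).map Complex.ofReal) i j * u j
        = ∑ j, ((if j = i then (a i : ℂ) * u i else 0)
            + (if j = i + 1 then (b i : ℂ) * u j else 0)) :=
          Finset.sum_congr rfl fun j _ => entry j
      _ = (a i : ℂ) * u i + (b i : ℂ) * u (i + 1) := by
          rw [Finset.sum_add_distrib, Finset.sum_ite_eq' Finset.univ i,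
            Finset.sum_ite_eq' Finset.univ (i + 1)]
          simp
      _ = μ * u i := by rw [key i]; ring
  · intro h
    have h0 := congrFun h 0
    rw [hu0] at h0
    exact one_ne_zero h0
end

section
/- Let n ≥ 2, let a, b : Fin n → ℝ with b_i ≠ 0 for all i, let μ ∈ ℂ, and let J(a,b) be the n-node ring Jacobian, regarded as a complex matrix. Suppose u : Fin n → ℂ is nonzero and satisfies J(a,b)·u = μ·u. Then: (1) u_j ≠ 0 for every j; (2) u_{j+1} = ((μ − a_j)/b_j)·u_j for every j, with the index j+1 taken modulo n; and (3) ∏_{i} (μ − a_i) = ∏_{i} b_i. -/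
open Polynomial

/-! Row `j` of `J u = μ u` reads `b j * u (j + 1) = (μ - a j) * u j`. As `b j ≠ 0`, a zero of `u`
propagates all the way around the cycle, and multiplying the `n` relations and cancelling
`∏ j, u j ≠ 0` gives `∏ j, b j = ∏ j, (μ - a j)`. -/

namespace Fin

variable {n : ℕ} [NeZero n]

theorem val_add_one_eq_mod (i : Fin n) : ((i + 1 : Fin n) : ℕ) = ((i : ℕ) + 1) % n := by
  rw [Fin.val_add, Fin.val_one', Nat.add_mod_mod]

theorem add_one_ne_self (hn : 2 ≤ n) (i : Fin n) : i + 1 ≠ i := by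
  rw [Ne, add_eq_left, Fin.one_eq_zero_iff]
  omega

open Fin.NatCast in
theorem forall_of_imp_add_one {P : Fin n → Prop} (hP : ∀ i, P i → P (i + 1)) {i : Fin n}
    (hi : P i) (k : Fin n) : P k := by
  have hiter : ∀ m : ℕ, P (i + (m : Fin n)) := by
    intro m
    induction m with
    | zero => simpa using hi
    | succ m ih => simpa [Nat.cast_succ, add_assoc] using hP _ ih
  simpa using hiter (k - i).val

theorem prod_comp_add_one {M : Type*} [CommMonoid M] (u : Fin n → M) :
    ∏ i, u (i + 1) = ∏ i, u i :=
  Fintype.prod_equiv (Equiv.addRight 1) _ _ fun _ => rfl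

theorem prod_eq_prod_of_mul_add_one_eq {R : Type*} [CommRing R] [IsDomain R]
    {b c u : Fin n → R} (hu : ∀ i, u i ≠ 0) (hrec : ∀ i, b i * u (i + 1) = c i * u i) :
    ∏ i, b i = ∏ i, c i := by
  have hprod : (∏ i, b i) * ∏ i, u i = (∏ i, c i) * ∏ i, u i :=
    calc (∏ i, b i) * ∏ i, u i = ∏ i, b i * u (i + 1) := by
          rw [Finset.prod_mul_distrib, prod_comp_add_one]
      _ = ∏ i, c i * u i := Finset.prod_congr rfl fun i _ => hrec i
      _ = (∏ i, c i) * ∏ i, u i := Finset.prod_mul_distrib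
  exact mul_right_cancel₀ (Finset.prod_ne_zero_iff.mpr fun i _ => hu i) hprod

end Fin

section RingJacobian

variable {n : ℕ} [NeZero n] (a b : Fin n → ℝ)

theorem ringJacobianN_apply (i k : Fin n) :
    ringJacobianN n a b i k = if k = i then a i else if k = i + 1 then b i else 0 := by
  simp only [ringJacobianN, Matrix.of_apply, ← Fin.val_add_one_eq_mod, Fin.val_inj]

variable {R : Type*} [CommRing R] (f : ℝ →+* R)

theorem ringJacobianN_map_mulVec_apply (hn : 2 ≤ n) (u : Fin n → R) (i : Fin n) :
    ((ringJacobianN n a b).map f).mulVec u i = f (a i) * u i + f (b i) * u (i + 1) := by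
  rw [Matrix.mulVec, dotProduct,
    Fintype.sum_eq_add i (i + 1) (Fin.add_one_ne_self hn i).symm]
  · simp [ringJacobianN_apply, Fin.add_one_ne_self hn i]
  · rintro k ⟨hki, hki1⟩
    simp [ringJacobianN_apply, hki, hki1]

theorem mul_apply_add_one_of_ringJacobianN_map_mulVec_eq_smul (hn : 2 ≤ n) {μ : R}
    {u : Fin n → R} (heig : ((ringJacobianN n a b).map f).mulVec u = μ • u) (i : Fin n) :
    f (b i) * u (i + 1) = (μ - f (a i)) * u i := by
  have h := congrFun heig i
  rw [ringJacobianN_map_mulVec_apply a b f hn, Pi.smul_apply, smul_eq_mul] at h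
  linear_combination h

end RingJacobian

theorem eigenvector_structure_ringJacobianN (n : ℕ) (hn : 2 ≤ n)
    (a b : Fin n → ℝ) (hb : ∀ i, b i ≠ 0) (μ : ℂ) (u : Fin n → ℂ)
    (hu : u ≠ 0)
    (heig : ((ringJacobianN n a b).map Complex.ofReal).mulVec u = μ • u) :
    (∀ j, u j ≠ 0) ∧
    (∀ j : Fin n,
      u ⟨((j : ℕ) + 1) % n, Nat.mod_lt _ (by omega)⟩ = ((μ - a j) / b j) * u j) ∧
    (∏ i, (μ - a i)) = ∏ i, (b i : ℂ) := by
  have : NeZero n := ⟨by omega⟩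
  have hrec : ∀ i, (b i : ℂ) * u (i + 1) = (μ - a i) * u i :=
    mul_apply_add_one_of_ringJacobianN_map_mulVec_eq_smul a b Complex.ofRealHom hn heig
  have hstep : ∀ j, u (j + 1) = ((μ - a j) / b j) * u j := fun j => by
    rw [div_mul_eq_mul_div, eq_div_iff (Complex.ofReal_ne_zero.mpr (hb j)), mul_comm, hrec]
  have hzero : ∀ j, u j ≠ 0 := fun j hj =>
    hu <| funext <| Fin.forall_of_imp_add_one (P := (u · = 0))
      (fun i hi => by rw [hstep, hi, mul_zero]) hj
  refine ⟨hzero, fun j => ?_, (Fin.prod_eq_prod_of_mul_add_one_eq hzero hrec).symm⟩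
  rw [← hstep]
  exact congrArg u (Fin.ext (Fin.val_add_one_eq_mod j).symm)
end

section
/- Let n ≥ 2 and let a, b : Fin n → ℝ. For every ε > 0 there exists b' : Fin n → ℝ with |b_i − b'_i| < ε for all i, such that the characteristic polynomial of the n-node ring Jacobian J(a,b'), regarded as a polynomial over ℂ, has n distinct roots (equivalently, is squarefree); that is, all eigenvalues of J(a,b') are simple. In particular, simplicity of all eigenvalues can be achieved by arbitrarily small perturbations of the coupling entries b alone, keeping the diagonal entries a fixed. -/
/-!
Over `ℂ` the characteristic polynomial of `J(a, b)` is `∏ (X - aᵢ) - ∏ bᵢ`: in the Leibniz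
expansion of `det (X - J)` only the identity and the backward `n`-cycle contribute. A polynomial
`q - c` fails to be squarefree only when `c = q z` for a root `z` of `q'`, i.e. for finitely many
`c`. Shifting every `bᵢ` by a small common `t` turns `∏ bᵢ` into a monic polynomial in `t` of
degree `n`, which meets that finite set for only finitely many `t`.
-/

open Polynomial

section CyclicBidiagonal

open Fin.NatCast Fin.CommRing

variable {m : ℕ}

/-- A fixed point `j` forces `j + 1` to be fixed, since `j` is already taken; so one fixed point
makes `σ` the identity. -/
lemma Equiv.Perm.eq_one_or_forall_eq_sub_one {σ : Equiv.Perm (Fin (m + 2))}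
    (hσ : ∀ i, σ i = i ∨ σ i = i - 1) : σ = 1 ∨ ∀ i, σ i = i - 1 := by
  by_cases hfix : ∃ j, σ j = j
  · left
    obtain ⟨j, hj⟩ := hfix
    have hsucc : ∀ i, σ i = i → σ (i + 1) = i + 1 := fun i hi =>
      (hσ (i + 1)).resolve_right fun h => by
        simpa using σ.injective (h.trans ((add_sub_cancel_right i 1).trans hi.symm))
    have hall : ∀ k : ℕ, σ (j + k) = j + k := by
      intro k
      induction k with
      | zero => simpa using hj
      | succ k ih => simpa [add_assoc] using hsucc _ ih
    ext i
    simpa using congrArg Fin.val (hall (i - j).val)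
  · push Not at hfix
    exact Or.inr fun i => (hσ i).resolve_left (hfix i)

def Matrix.cyclicBidiagonal_s17 {R : Type*} [Zero R] (d e : Fin (m + 2) → R) :
    Matrix (Fin (m + 2)) (Fin (m + 2)) R :=
  Matrix.of fun i j => if j = i then d i else if j = i + 1 then e i else 0

lemma Matrix.det_cyclicBidiagonal_s17 {R : Type*} [CommRing R] (d e : Fin (m + 2) → R) :
    (Matrix.cyclicBidiagonal_s17 d e).det = ∏ i, d i + (-1) ^ (m + 1) * ∏ i, e i := by
  set c : Equiv.Perm (Fin (m + 2)) := (finRotate (m + 2))⁻¹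
  have hc : ∀ i, c i = i - 1 := fun i => by
    rw [Equiv.Perm.inv_eq_iff_eq, finRotate_apply, sub_add_cancel]
  have hc1 : (1 : Equiv.Perm (Fin (m + 2))) ≠ c := fun h => by
    simpa [hc] using congrArg (· 0) h
  have hsign : Equiv.Perm.sign c = (-1) ^ (m + 1) := by
    rw [Equiv.Perm.sign_inv, sign_finRotate]; rfl
  have hcycle : ∏ i, cyclicBidiagonal_s17 d e (c i) i = ∏ i, e i := by
    have hne : ∀ i : Fin (m + 2), i ≠ i - 1 := fun i h => one_ne_zero (sub_eq_self.mp h.symm)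
    simp only [hc, cyclicBidiagonal_s17, Matrix.of_apply, if_neg (hne _), sub_add_cancel, if_true]
    exact Equiv.prod_comp (Equiv.subRight 1) e
  have hrest : ∀ σ : Equiv.Perm (Fin (m + 2)), σ ≠ 1 ∧ σ ≠ c →
      Equiv.Perm.sign σ • ∏ i, cyclicBidiagonal_s17 d e (σ i) i = 0 := by
    rintro σ ⟨hσ1, hσc⟩
    obtain ⟨i, hi, hi'⟩ : ∃ i, σ i ≠ i ∧ σ i ≠ i - 1 := by
      by_contra! h
      rcases Equiv.Perm.eq_one_or_forall_eq_sub_one (fun i => or_iff_not_imp_left.2 (h i))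
        with h1 | hsub
      · exact hσ1 h1
      · exact hσc (Equiv.ext fun i => (hsub i).trans (hc i).symm)
    have hzero : cyclicBidiagonal_s17 d e (σ i) i = 0 := by
      have hi'' : i ≠ σ i + 1 := fun h => hi' (eq_sub_of_add_eq h.symm)
      simp [cyclicBidiagonal_s17, Ne.symm hi, hi'']
    rw [Finset.prod_eq_zero (f := fun j => cyclicBidiagonal_s17 d e (σ j) j) (Finset.mem_univ i) hzero,
      smul_zero]
  rw [Matrix.det_apply, Fintype.sum_eq_add 1 c hc1 hrest, hsign, hcycle]
  simp [cyclicBidiagonal_s17, Units.smul_def]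

lemma Matrix.cyclicBidiagonal_map_s17 {R S : Type*} [Zero R] [Zero S] (d e : Fin (m + 2) → R)
    {f : R → S} (hf : f 0 = 0) :
    (cyclicBidiagonal_s17 d e).map f = cyclicBidiagonal_s17 (f ∘ d) (f ∘ e) := by
  ext i j
  simp only [cyclicBidiagonal_s17, Matrix.map_apply, Matrix.of_apply, Function.comp_apply]
  split_ifs <;> simp [hf]

lemma Matrix.charmatrix_cyclicBidiagonal {R : Type*} [CommRing R] (d e : Fin (m + 2) → R) :
    (cyclicBidiagonal_s17 d e).charmatrix =
      cyclicBidiagonal_s17 (fun i => X - C (d i)) (fun i => -C (e i)) := by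
  ext i j
  by_cases hij : j = i
  · subst hij
    simp [cyclicBidiagonal_s17]
  · rw [Matrix.charmatrix_apply_ne _ _ _ (Ne.symm hij)]
    simp only [cyclicBidiagonal_s17, Matrix.of_apply, if_neg hij]
    split_ifs <;> simp

lemma Matrix.charpoly_cyclicBidiagonal {R : Type*} [CommRing R] (d e : Fin (m + 2) → R) :
    (cyclicBidiagonal_s17 d e).charpoly = ∏ i, (X - C (d i)) - C (∏ i, e i) := by
  have hsign : (-1 : R[X]) ^ (m + 1) * (-1) ^ (m + 2) = -1 := by
    rw [← pow_add]
    exact Odd.neg_one_pow ⟨m + 1, by ring⟩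
  rw [Matrix.charpoly, charmatrix_cyclicBidiagonal, det_cyclicBidiagonal_s17, map_prod,
    Finset.prod_neg, Finset.card_univ, Fintype.card_fin]
  linear_combination (∏ i, C (e i)) * hsign

end CyclicBidiagonal

lemma ringJacobianN_eq_cyclicBidiagonal_s17 {m : ℕ} (a b : Fin (m + 2) → ℝ) :
    ringJacobianN (m + 2) a b = Matrix.cyclicBidiagonal_s17 a b := by
  have hsucc : ∀ i j : Fin (m + 2), (j : ℕ) = ((i : ℕ) + 1) % (m + 2) ↔ j = i + 1 := by
    intro i j
    rw [Fin.ext_iff, Fin.val_add, Fin.val_one]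
  ext i j
  simp only [ringJacobianN, Matrix.cyclicBidiagonal_s17, Matrix.of_apply, Fin.val_inj, hsucc]

lemma Polynomial.finite_setOf_not_separable_sub_C {K : Type*} [Field K] [IsAlgClosed K]
    {q : K[X]} (hq : derivative q ≠ 0) : {c | ¬ (q - C c).Separable}.Finite := by
  refine ((finite_setOfPred_isRoot hq).image q.eval).subset fun c hc => ?_
  rw [Set.mem_ofPred_eq, Separable, isCoprime_iff_aeval_ne_zero_of_isAlgClosed K K] at hc
  push Not at hc
  obtain ⟨z, hz, hz'⟩ := hc
  simp only [coe_aeval_eq_eval, eval_sub, eval_C, derivative_sub, derivative_C, sub_zero,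
    sub_eq_zero] at hz hz'
  exact ⟨z, hz', hz⟩

lemma Polynomial.finite_preimage_eval {R : Type*} [CommRing R] [IsDomain R] {p : R[X]}
    (hp : 0 < p.natDegree) {S : Set R} (hS : S.Finite) : ((fun t => p.eval t) ⁻¹' S).Finite := by
  refine (hS.biUnion fun s _ => finite_setOfPred_isRoot (p := p - C s) ?_).subset fun t ht => ?_
  · exact sub_ne_zero.mpr fun h => by simp [h] at hp
  · exact Set.mem_biUnion (x := p.eval t) ht (by simp)

lemma exists_forall_abs_sub_lt_prod_notMem {ι : Type*} [Fintype ι] [Nonempty ι] (b : ι → ℝ)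
    {S : Set ℝ} (hS : S.Finite) {ε : ℝ} (hε : 0 < ε) :
    ∃ b' : ι → ℝ, (∀ i, |b i - b' i| < ε) ∧ ∏ i, b' i ∉ S := by
  set p : ℝ[X] := ∏ i, (X + C (b i))
  have hp : 0 < p.natDegree := by
    rw [natDegree_prod_of_monic _ _ fun i _ => monic_X_add_C (b i)]
    simp [Fintype.card_pos]
  obtain ⟨t, ⟨ht0, htε⟩, htS⟩ := ((Set.Ioo_infinite hε).sdiff (finite_preimage_eval hp hS)).nonempty
  refine ⟨fun i => b i + t, fun i => ?_, ?_⟩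
  · rwa [sub_add_cancel_left, abs_neg, abs_of_pos ht0]
  · simpa [p, eval_prod, add_comm] using htS

theorem simple_eigenvalues_generic_ringJacobianN (n : ℕ) (hn : 2 ≤ n)
    (a b : Fin n → ℝ) :
    ∀ ε > (0 : ℝ), ∃ b' : Fin n → ℝ,
      (∀ i, |b i - b' i| < ε) ∧
      Squarefree ((ringJacobianN n a b').map Complex.ofReal).charpoly := by
  obtain ⟨m, rfl⟩ : ∃ m, n = m + 2 := ⟨n - 2, by omega⟩
  intro ε hε
  set q : ℂ[X] := ∏ i, (X - C (a i : ℂ))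
  have hq : derivative q ≠ 0 := by
    rw [Ne, derivative_eq_zero, natDegree_prod_of_monic _ _ fun i _ => monic_X_sub_C _]
    simp
  obtain ⟨b', hclose, hsep⟩ := exists_forall_abs_sub_lt_prod_notMem b
    ((finite_setOf_not_separable_sub_C hq).preimage Complex.ofReal_injective.injOn) hε
  refine ⟨b', hclose, ?_⟩
  rw [ringJacobianN_eq_cyclicBidiagonal_s17, Matrix.cyclicBidiagonal_map_s17 _ _ Complex.ofReal_zero,
    Matrix.charpoly_cyclicBidiagonal, ← PerfectField.separable_iff_squarefree]
  simpa using hsep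
end

section
/- Let n ≥ 2 and let a, b : Fin n → ℝ. For every ε > 0 there exists b' : Fin n → ℝ with |b_i − b'_i| < ε for all i, such that the characteristic polynomial p of the n-node ring Jacobian J(a,b'), regarded as a polynomial over ℂ, has no resonance: for every rational number k with k ≠ 1 and k ≠ −1, there is no λ ∈ ℂ with p(λ) = 0 and p(kλ) = 0. In particular, all resonances among eigenvalues can be removed by arbitrarily small perturbations of the coupling entries b alone, keeping the diagonal entries a fixed. -/
/-!
For `n ≥ 2` only the identity and the rotation `i ↦ i + 1` contribute to the determinant of the
characteristic matrix of the ring Jacobian, so its characteristic polynomial is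
`Q - t` with `Q = ∏ i, (X - a i)` and `t = ∏ i, b i`: the coupling entries only enter through `t`.
If `λ` and `kλ` are roots of `Q - t` for a rational `k ≠ ±1`, then `λ` is a root of
`Q(X) - Q(kX)`, which is nonzero because its coefficient of `X ^ n` is `1 - k ^ n`; hence
`t = Q(λ)` lies in a finite set for each `k`, and the resonant values of `t` form a countable set.
Shifting every `b i` by the same small `s` turns `t` into a monic polynomial in `s`, whose
preimage of a countable set is countable, so some arbitrarily small shift avoids all resonances.
-/

open Polynomial

namespace Equiv.Perm

variable {α : Type*} [Finite α]

theorem eq_one_or_eq_of_forall_eq_or_eq {f σ : Perm α} (hf : f.IsCycle) (hf' : ∀ x, f x ≠ x)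
    (hσ : ∀ x, σ x = x ∨ σ x = f x) : σ = 1 ∨ σ = f := by
  by_cases hfix : ∀ x, σ x = x
  · exact Or.inl (Equiv.ext hfix)
  obtain ⟨x₀, hx₀⟩ := not_forall.mp hfix
  have hpow : ∀ k : ℕ, σ ((f ^ k) x₀) = f ((f ^ k) x₀) := by
    intro k
    induction k with
    | zero => exact (hσ x₀).resolve_left hx₀
    | succ k ih =>
      rw [pow_succ', Perm.mul_apply]
      refine (hσ _).resolve_left fun hfixed => hf' ((f ^ k) x₀) (σ.injective ?_).symm
      rw [ih, hfixed]
  refine Or.inr (Equiv.ext fun y => ?_)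
  obtain ⟨k, rfl⟩ := hf.exists_pow_eq (hf' x₀) (hf' y)
  exact hpow k

end Equiv.Perm

theorem Matrix.det_eq_of_eq_zero_off_cycle {ι R : Type*} [Fintype ι]
    [DecidableEq ι] [CommRing R] (M : Matrix ι ι R) {f : Equiv.Perm ι} (hf : f.IsCycle)
    (hf' : ∀ x, f x ≠ x) (hM : ∀ i j, j ≠ i → j ≠ f i → M i j = 0) :
    M.det = ∏ i, M i i + Equiv.Perm.sign f • ∏ i, M i (f i) := by
  have h1f : (1 : Equiv.Perm ι) ≠ f := by
    obtain ⟨x, hx, -⟩ := hf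
    exact fun h => hx (by rw [← h]; rfl)
  have hvanish : ∀ σ : Equiv.Perm ι, σ ≠ 1 → σ ≠ f → ∏ i, M i (σ i) = 0 := by
    intro σ hσ1 hσf
    obtain ⟨i, hi⟩ : ∃ i, ¬ (σ i = i ∨ σ i = f i) := not_forall.mp fun h =>
      (Equiv.Perm.eq_one_or_eq_of_forall_eq_or_eq hf hf' h).elim hσ1 hσf
    push Not at hi
    exact Finset.prod_eq_zero (Finset.mem_univ i) (hM i (σ i) hi.1 hi.2)
  rw [← det_transpose, det_apply, ← Finset.sum_subset (Finset.subset_univ {1, f}) ?_,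
    Finset.sum_pair h1f]
  · simp
  · intro σ _ hσ
    simp only [Finset.mem_insert, Finset.mem_singleton, not_or] at hσ
    simp only [transpose_apply, hvanish σ hσ.1 hσ.2, smul_zero]

theorem Fin.val_finRotate {n : ℕ} (i : Fin n) : (finRotate n i : ℕ) = (i + 1) % n := by
  have := i.neZero
  rw [finRotate_apply, Fin.val_add, Fin.val_one', Nat.add_mod_mod]

theorem finRotate_apply_ne_self {n : ℕ} (hn : 2 ≤ n) (i : Fin n) : finRotate n i ≠ i := by
  rw [← Equiv.Perm.mem_support, support_finRotate_of_le hn]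
  exact Finset.mem_univ i

section RingJacobian

variable {n : ℕ} (a b : Fin n → ℝ)

theorem ringJacobianN_apply_self (i : Fin n) : ringJacobianN n a b i i = a i := by
  simp [ringJacobianN]

theorem ringJacobianN_apply_finRotate (hn : 2 ≤ n) (i : Fin n) :
    ringJacobianN n a b i (finRotate n i) = b i := by
  rw [ringJacobianN, Matrix.of_apply, if_neg (Fin.val_ne_of_ne (finRotate_apply_ne_self hn i)),
    if_pos (Fin.val_finRotate i)]

theorem ringJacobianN_apply_of_ne {i j : Fin n} (hij : j ≠ i) (hj : j ≠ finRotate n i) :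
    ringJacobianN n a b i j = 0 := by
  have hj' : (j : ℕ) ≠ (i + 1) % n := by rwa [← Fin.val_finRotate, Fin.val_ne_iff]
  rw [ringJacobianN, Matrix.of_apply, if_neg (Fin.val_ne_of_ne hij), if_neg hj']

theorem ringJacobianN_charpoly (hn : 2 ≤ n) :
    (ringJacobianN n a b).charpoly = ∏ i, (X - C (a i)) - C (∏ i, b i) := by
  have hsparse : ∀ i j, j ≠ i → j ≠ finRotate n i → (ringJacobianN n a b).charmatrix i j = 0 :=
    fun i j hij hj => by
      rw [Matrix.charmatrix_apply_ne _ _ _ hij.symm, ringJacobianN_apply_of_ne a b hij hj,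
        map_zero, neg_zero]
  rw [Matrix.charpoly, Matrix.det_eq_of_eq_zero_off_cycle _
    (isCycle_finRotate_of_le hn) (finRotate_apply_ne_self hn) hsparse]
  simp only [Matrix.charmatrix_apply_eq, ringJacobianN_apply_self,
    Matrix.charmatrix_apply_ne _ _ _ (finRotate_apply_ne_self hn _).symm,
    ringJacobianN_apply_finRotate a b hn, sign_finRotate]
  rw [Finset.prod_neg, map_prod, Finset.card_univ, Fintype.card_fin, Units.smul_def,
    zsmul_eq_mul]
  push_cast
  rw [← mul_assoc, ← pow_add, Odd.neg_one_pow ⟨n - 1, by omega⟩]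
  ring

theorem ringJacobianN_map_ofReal_charpoly (hn : 2 ≤ n) :
    ((ringJacobianN n a b).map Complex.ofReal).charpoly =
      ∏ i, (X - C (a i : ℂ)) - C ((∏ i, b i : ℝ) : ℂ) := by
  rw [← Complex.coe_algebraMap, Matrix.charpoly_map, ringJacobianN_charpoly a b hn]
  simp [Polynomial.map_prod]

end RingJacobian

def HasResonance (p : ℂ[X]) : Prop :=
  ∃ k : ℚ, k ≠ 1 ∧ k ≠ -1 ∧ ∃ lam : ℂ, p.IsRoot lam ∧ p.IsRoot (k * lam)

namespace Polynomial

theorem Monic.sub_comp_C_mul_X_ne_zero {R : Type*} [CommRing R] {p : R[X]} (hp : p.Monic)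
    {r : R} (hr : r ^ p.natDegree ≠ 1) : p - p.comp (C r * X) ≠ 0 := by
  intro h
  have := congrArg (coeff · p.natDegree) h
  simp only [coeff_sub, comp_C_mul_X_coeff, hp.coeff_natDegree, one_mul, coeff_zero] at this
  exact hr (sub_eq_zero.mp this).symm

theorem countable_preimage_eval {R : Type} [CommRing R] [IsDomain R] {p : R[X]}
    (hp : p.natDegree ≠ 0) {s : Set R} (hs : s.Countable) : (p.eval ⁻¹' s).Countable := by
  have := p.tendstoCofinite_of_natDegree_ne_zero hp
  rw [← Set.biUnion_preimage_singleton]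
  exact hs.biUnion fun x _ => (Filter.TendstoCofinite.finite_preimage_singleton p.eval x).countable

end Polynomial

theorem Rat.cast_pow_ne_one {K : Type*} [Field K] [CharZero K] {k : ℚ} (hk₁ : k ≠ 1)
    (hk₂ : k ≠ -1) {n : ℕ} (hn : n ≠ 0) : (k : K) ^ n ≠ 1 := by
  have : k ^ n ≠ 1 := fun h => by
    rcases (pow_eq_one_iff_of_ne_zero hn).mp h with h | ⟨h, -⟩ <;> contradiction
  exact_mod_cast this

theorem countable_setOf_hasResonance_sub_C {Q : ℂ[X]} (hQ : Q.Monic) (hd : Q.natDegree ≠ 0) :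
    {t : ℂ | HasResonance (Q - C t)}.Countable := by
  let K := {k : ℚ | k ≠ 1 ∧ k ≠ -1}
  refine ((Set.to_countable K).biUnion fun (k : ℚ) (hk : k ∈ K) =>
    ((finite_setOfPred_isRoot (hQ.sub_comp_C_mul_X_ne_zero
      (Rat.cast_pow_ne_one hk.1 hk.2 hd))).image Q.eval).countable).mono ?_
  rintro t ⟨k, hk₁, hk₂, lam, h₁, h₂⟩
  simp only [IsRoot, eval_sub, eval_C, sub_eq_zero] at h₁ h₂
  refine Set.mem_biUnion ⟨hk₁, hk₂⟩ ⟨lam, ?_, h₁⟩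
  simp [IsRoot, eval_comp, h₁, h₂]

theorem exists_abs_sub_lt_prod_notMem {ι : Type*} [Fintype ι] [Nonempty ι] (b : ι → ℝ)
    {S : Set ℝ} (hS : S.Countable) {ε : ℝ} (hε : 0 < ε) :
    ∃ b' : ι → ℝ, (∀ i, |b i - b' i| < ε) ∧ ∏ i, b' i ∉ S := by
  let p : ℝ[X] := ∏ i, (X + C (b i))
  have hp : p.natDegree ≠ 0 := by
    rw [natDegree_prod_of_monic _ _ fun i _ => monic_X_add_C _]
    simp
  obtain ⟨t, ht, htε⟩ := ((countable_preimage_eval hp hS).dense_compl ℝ).exists_mem_open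
    isOpen_Ioo (Set.nonempty_Ioo.mpr (neg_lt_self hε))
  refine ⟨fun i => b i + t, fun i => ?_, ?_⟩
  · rw [sub_add_cancel_left, abs_neg]
    exact abs_lt.mpr htε
  · simpa [p, eval_prod, add_comm] using ht

theorem no_resonance_generic_ringJacobianN (n : ℕ) (hn : 2 ≤ n)
    (a b : Fin n → ℝ) :
    ∀ ε > (0 : ℝ), ∃ b' : Fin n → ℝ,
      (∀ i, |b i - b' i| < ε) ∧
      ∀ k : ℚ, k ≠ 1 → k ≠ -1 →
        ¬ ∃ lam : ℂ,
          ((ringJacobianN n a b').map Complex.ofReal).charpoly.IsRoot lam ∧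
          ((ringJacobianN n a b').map Complex.ofReal).charpoly.IsRoot ((k : ℂ) * lam) := by
  intro ε hε
  have : Nonempty (Fin n) := ⟨⟨0, by omega⟩⟩
  let Q : ℂ[X] := ∏ i, (X - C (a i : ℂ))
  have hQ : Q.Monic := monic_prod_of_monic _ _ fun i _ => monic_X_sub_C _
  have hQd : Q.natDegree = n := by
    rw [natDegree_prod_of_monic _ _ fun i _ => monic_X_sub_C _]
    simp
  obtain ⟨b', hb', hres⟩ := exists_abs_sub_lt_prod_notMem b
    ((countable_setOf_hasResonance_sub_C hQ (by omega)).preimage Complex.ofReal_injective) hε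
  refine ⟨b', hb', fun k hk₁ hk₂ ⟨lam, h₁, h₂⟩ => hres ⟨k, hk₁, hk₂, lam, ?_⟩⟩
  rw [ringJacobianN_map_ofReal_charpoly a b' hn] at h₁ h₂
  exact ⟨h₁, h₂⟩
end
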